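/- arXiv:1707.07724 — 7 statements merged into one kernel-verified Lean document; each statement's English description precedes it below -/
import Mathlib

section
/- Let p be a real polynomial of degree n and let a < b be real numbers. If both p(t)+a and p(t)+b have all real roots, then for every c in the open interval (a,b), the polynomial p(t)+c has n real and distinct roots. -/
/-!
Let `Z` be the set of distinct roots of `(p + a)(p + b)`. Between two consecutive points of `Z`,
either `p` takes the same value at both and Rolle's theorem gives a critical point of `p`, or `p`
passes from `-a` to `-b` (or back) and the intermediate value theorem gives a root of `p + c`.
Since `p + a` and `p + b` split, `p'` already has `2n - #Z` roots on `Z`, counted with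
multiplicity, which leaves at most `#Z - n - 1` critical points off `Z`. Hence at least `n` of the
`#Z - 1` gaps contain distinct roots of `p + c`.
-/

open Polynomial

open Set in
theorem exists_mem_Ioo_eq_or_deriv_eq_zero {f : ℝ → ℝ} (hf : Continuous f) {x y α β γ : ℝ}
    (hxy : x < y) (hαγ : α < γ) (hγβ : γ < β) (hx : f x = α ∨ f x = β) (hy : f y = α ∨ f y = β) :
    ∃ z ∈ Ioo x y, f z = γ ∨ deriv f z = 0 := by
  by_cases hfxy : f x = f y
  · obtain ⟨z, hz, hz'⟩ := exists_deriv_eq_zero hxy hf.continuousOn hfxy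
    exact ⟨z, hz, Or.inr hz'⟩
  have hγ : γ ∈ Ioo (f x) (f y) ∨ γ ∈ Ioo (f y) (f x) := by
    rcases hx with hx | hx <;> rcases hy with hy | hy <;> simp_all
  rcases hγ with hγ | hγ
  · obtain ⟨z, hz, hz'⟩ := intermediate_value_Ioo hxy.le hf.continuousOn hγ
    exact ⟨z, hz, Or.inl hz'⟩
  · obtain ⟨z, hz, hz'⟩ := intermediate_value_Ioo' hxy.le hf.continuousOn hγ
    exact ⟨z, hz, Or.inl hz'⟩

theorem Multiset.sum_count_add_card_sdiff_le_card {α : Type*} [DecidableEq α]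
    (m : Multiset α) (s : Finset α) :
    ∑ x ∈ s, m.count x + (m.toFinset \ s).card ≤ Multiset.card m := by
  calc ∑ x ∈ s, m.count x + (m.toFinset \ s).card
      ≤ ∑ x ∈ s, m.count x + ∑ x ∈ m.toFinset \ s, m.count x := by
        rw [Finset.card_eq_sum_ones]
        gcongr with x hx
        exact Multiset.one_le_count_iff_mem.mpr
          (Multiset.mem_toFinset.mp (Finset.mem_sdiff.mp hx).1)
    _ = ∑ x ∈ s ∪ m.toFinset, m.count x := by
        rw [← Finset.sum_union Finset.disjoint_sdiff, Finset.union_sdiff_self_eq_union]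
    _ = Multiset.card m := Multiset.sum_count_eq_card fun x hx =>
        Finset.mem_union_right _ (Multiset.mem_toFinset.mpr hx)

namespace Polynomial

theorem sum_count_roots_derivative_add_card_toFinset {K : Type*} [Field K] [CharZero K]
    [DecidableEq K] (q : K[X]) :
    ∑ x ∈ q.roots.toFinset, q.derivative.roots.count x + q.roots.toFinset.card =
      Multiset.card q.roots := by
  rw [← Multiset.toFinset_sum_count_eq, Finset.card_eq_sum_ones, ← Finset.sum_add_distrib]
  refine Finset.sum_congr rfl fun x hx => ?_
  have hx' := Multiset.mem_toFinset.mp hx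
  rw [count_roots, count_roots, derivative_rootMultiplicity_of_root (isRoot_of_mem_roots hx'),
    Nat.sub_add_cancel ((rootMultiplicity_pos (ne_zero_of_mem_roots hx')).mpr
      (isRoot_of_mem_roots hx'))]

theorem disjoint_roots_add_C (p : ℝ[X]) {a b : ℝ} (hab : a ≠ b) :
    Disjoint (p + C a).roots.toFinset (p + C b).roots.toFinset := by
  refine Finset.disjoint_left.mpr fun x hxa hxb => hab ?_
  simp only [Multiset.mem_toFinset, mem_roots', IsRoot.def, eval_add, eval_C] at hxa hxb
  linarith [hxa.2, hxb.2]

theorem card_roots_add_C_union_le_card_sdiff_succ (p : ℝ[X]) (hp : 0 < p.natDegree) {a b c : ℝ}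
    (hac : a < c) (hcb : c < b) :
    ((p + C a).roots.toFinset ∪ (p + C b).roots.toFinset).card ≤
      (((p + C c).roots.toFinset ∪ (derivative p).roots.toFinset) \
        ((p + C a).roots.toFinset ∪ (p + C b).roots.toFinset)).card + 1 := by
  have hne : ∀ d, p + C d ≠ 0 := fun d h =>
    hp.ne' (by rw [← natDegree_add_C (a := d), h, natDegree_zero])
  have hp' : derivative p ≠ 0 := fun h => hp.ne' (derivative_eq_zero.mp h)
  refine Finset.card_le_sdiff_of_interleaved fun x hx y hy hxy _ => ?_
  simp only [Finset.mem_union, Multiset.mem_toFinset, mem_roots (hne _), IsRoot.def, eval_add,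
    eval_C, ← eq_neg_iff_add_eq_zero] at hx hy
  obtain ⟨z, hz, hz'⟩ := exists_mem_Ioo_eq_or_deriv_eq_zero p.continuous hxy (neg_lt_neg hcb)
    (neg_lt_neg hac) hx.symm hy.symm
  refine ⟨z, ?_, hz.1, hz.2⟩
  simp only [Finset.mem_union, Multiset.mem_toFinset, mem_roots (hne _), mem_roots hp', IsRoot.def,
    eval_add, eval_C, ← eq_neg_iff_add_eq_zero, ← p.deriv]
  exact hz'

end Polynomial

/-- If `p+a` and `p+b` have all real roots, then for `c ∈ (a,b)` the polynomial
`p+c` has `n` real, distinct roots. -/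
theorem stmt0 (p : Polynomial ℝ) (n : ℕ) (hn : 1 ≤ n) (hdeg : p.natDegree = n)
    (a b c : ℝ) (hab : a < b) (hac : a < c) (hcb : c < b)
    (ha : (p + C a).roots.card = n) (hb : (p + C b).roots.card = n) :
    (p + C c).roots.card = n ∧ (p + C c).roots.Nodup := by
  classical
  set Y := (p + C a).roots.toFinset
  set X := (p + C b).roots.toFinset
  set R := (p + C c).roots.toFinset
  set D := (derivative p).roots.toFinset
  have hYX : (Y ∪ X).card = Y.card + X.card :=
    Finset.card_union_of_disjoint (disjoint_roots_add_C p hab.ne)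
  have hinterlace : (Y ∪ X).card ≤ R.card + (D \ (Y ∪ X)).card + 1 := by
    calc (Y ∪ X).card ≤ ((R ∪ D) \ (Y ∪ X)).card + 1 :=
          card_roots_add_C_union_le_card_sdiff_succ p (hdeg ▸ hn) hac hcb
      _ ≤ R.card + (D \ (Y ∪ X)).card + 1 := by
          grw [Finset.union_sdiff_distrib, Finset.card_union_le, Finset.sdiff_subset (s := R)]
  have hderiv_roots : ∑ x ∈ Y, (derivative p).roots.count x +
      ∑ x ∈ X, (derivative p).roots.count x + (D \ (Y ∪ X)).card ≤ n - 1 := by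
    rw [← Finset.sum_union (disjoint_roots_add_C p hab.ne), ← hdeg]
    calc _ ≤ Multiset.card (derivative p).roots :=
          Multiset.sum_count_add_card_sdiff_le_card _ _
      _ ≤ (derivative p).natDegree := card_roots' _
      _ ≤ p.natDegree - 1 := natDegree_derivative_le p
  have hY : ∑ x ∈ Y, (derivative p).roots.count x + Y.card = n := by
    simpa only [derivative_add, derivative_C, add_zero, ha] using
      sum_count_roots_derivative_add_card_toFinset (p + C a)
  have hX : ∑ x ∈ X, (derivative p).roots.count x + X.card = n := by
    simpa only [derivative_add, derivative_C, add_zero, hb] using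
      sum_count_roots_derivative_add_card_toFinset (p + C b)
  have hR : R.card ≤ Multiset.card (p + C c).roots := Multiset.toFinset_card_le _
  have hc : Multiset.card (p + C c).roots ≤ n :=
    (card_roots' _).trans_eq (by rw [natDegree_add_C, hdeg])
  have hcard : Multiset.card (p + C c).roots = n := by omega
  exact ⟨hcard, Multiset.toFinset_card_eq_card_iff_nodup.mp (hR.antisymm (by omega))⟩
end

section
/- Let A = S(a_1,...,a_n) be a cyclic weighted shift matrix with complex entries. Then f_A(t,x,y) = det(tI + x·Re(A) + y·Im(A)) is invariant under the rotation Φ sending (t,x,y) to (t, x·cos(2π/n) − y·sin(2π/n), x·sin(2π/n) + y·cos(2π/n)); that is, f_A(Φ(t,x,y)) = f_A(t,x,y). -/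
/-!
With `z = x + iy` one has `x Re A + y Im A = (z̄ A + z A*) / 2`, and the rotation multiplies `z`
by `ω = e^{2πi/n}`. The diagonal matrix `Ω = diag(1, ω, …, ω^{n-1})` satisfies `AΩ = ω ΩA` and
`ΩA* = ω A*Ω` (the relation `ω^n = 1` is what makes this hold at the wrap-around entry), so
`Ω` intertwines the pencil at the rotated point with the pencil at `(t, x, y)` and the two
determinants agree.
-/

open Matrix Complex Real

/-- A cyclic weighted shift matrix: `A (i) (i+1) = a i` (indices mod `n`), zeros elsewhere. -/
def cyclicShift (n : ℕ) [NeZero n] (a : Fin n → ℂ) : Matrix (Fin n) (Fin n) ℂ :=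
  Matrix.of fun i j => if j = i + 1 then a i else 0

theorem pow_val_add_one_of_pow_eq_one {M : Type*} [Monoid M] {n : ℕ} [NeZero n] {ζ : M}
    (hζ : ζ ^ n = 1) (i : Fin n) : ζ ^ ((i + 1 : Fin n) : ℕ) = ζ * ζ ^ (i : ℕ) := by
  rw [Fin.val_add, Fin.val_one', ← pow_eq_pow_mod _ hζ, pow_add, ← pow_eq_pow_mod _ hζ, pow_one]
  exact (Commute.self_pow ζ _).symm

section Pencil

variable {R m : Type*} [CommRing R] [Fintype m] [DecidableEq m]

theorem det_pencil_eq_of_mul_eq_smul_mul {A B D : Matrix m m R} {α : R}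
    (hA : A * D = α • (D * A)) (hB : D * B = α • (B * D)) (hD : IsUnit D.det) (t a b : R) :
    det (t • 1 + a • A + (α * b) • B) = det (t • 1 + (α * a) • A + b • B) := by
  have hconj : (t • 1 + a • A + (α * b) • B) * D = D * (t • 1 + (α * a) • A + b • B) := by
    simp only [add_mul, mul_add, smul_mul_assoc, mul_smul_comm, one_mul, mul_one, hA, hB, smul_smul,
      mul_comm α]
  have hdet := congrArg det hconj
  rw [det_mul, det_mul, mul_comm D.det] at hdet
  exact hD.mul_right_cancel hdet

end Pencil

theorem smul_one_add_smul_re_add_smul_im {m : Type*} [Fintype m] [DecidableEq m]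
    (A : Matrix m m ℂ) (t x y : ℂ) :
    t • 1 + x • ((2 : ℂ)⁻¹ • (A + Aᴴ)) + y • ((2 * I)⁻¹ • (A - Aᴴ))
      = t • 1 + ((x - y * I) / 2) • A + ((x + y * I) / 2) • Aᴴ := by
  ext i j
  simp only [Matrix.add_apply, Matrix.smul_apply, Matrix.sub_apply, smul_eq_mul]
  field_simp
  linear_combination (y * (A i j - Aᴴ i j)) * I_sq

section CyclicShift

variable {n : ℕ} [NeZero n] (a : Fin n → ℂ) {d : Fin n → ℂ} {ζ : ℂ}

theorem cyclicShift_mul_diagonal (hd : ∀ i, d (i + 1) = ζ * d i) :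
    cyclicShift n a * diagonal d = ζ • (diagonal d * cyclicShift n a) := by
  ext i j
  simp only [cyclicShift, mul_diagonal, diagonal_mul, Matrix.smul_apply, of_apply, smul_eq_mul]
  split_ifs with h
  · rw [h, hd]; ring
  · ring

theorem diagonal_mul_cyclicShift_conjTranspose (hd : ∀ i, d (i + 1) = ζ * d i) :
    diagonal d * (cyclicShift n a)ᴴ = ζ • ((cyclicShift n a)ᴴ * diagonal d) := by
  ext i j
  simp only [cyclicShift, conjTranspose_apply, mul_diagonal, diagonal_mul, Matrix.smul_apply,
    of_apply, smul_eq_mul]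
  split_ifs with h
  · rw [h, hd]; ring
  · simp

end CyclicShift

theorem ofReal_rotate_add_mul_I (θ x y : ℝ) :
    ((x * Real.cos θ - y * Real.sin θ : ℝ) : ℂ) + (x * Real.sin θ + y * Real.cos θ : ℝ) * I
      = exp (θ * I) * (x + y * I) := by
  rw [exp_mul_I]
  push_cast
  linear_combination (-y * Complex.sin θ) * I_sq

theorem ofReal_rotate_sub_mul_I (θ x y : ℝ) :
    exp (θ * I) * (((x * Real.cos θ - y * Real.sin θ : ℝ) : ℂ)
      - (x * Real.sin θ + y * Real.cos θ : ℝ) * I) = x - y * I := by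
  rw [exp_mul_I]
  push_cast
  linear_combination (x - y * I) * Complex.cos_sq_add_sin_sq (θ : ℂ)
    - (Complex.cos θ * Complex.sin θ * y + Complex.sin θ ^ 2 * x) * I_sq

/-- For a cyclic weighted shift matrix `A`, `f_A(t,x,y) = det(tI + x Re A + y Im A)`
is invariant under the rotation by angle `2π/n` about the `t`-axis. -/
theorem stmt3 (n : ℕ) [NeZero n] (a : Fin n → ℂ)
    (A : Matrix (Fin n) (Fin n) ℂ) (hA : A = cyclicShift n a)
    (ReA ImA : Matrix (Fin n) (Fin n) ℂ)
    (hRe : ReA = (2 : ℂ)⁻¹ • (A + Aᴴ)) (hIm : ImA = (2 * Complex.I)⁻¹ • (A - Aᴴ))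
    (f : ℝ → ℝ → ℝ → ℂ)
    (hf : ∀ t x y : ℝ, f t x y =
      Matrix.det ((t : ℂ) • (1 : Matrix (Fin n) (Fin n) ℂ) + (x : ℂ) • ReA + (y : ℂ) • ImA)) :
    ∀ t x y : ℝ,
      f t (x * Real.cos (2 * π / n) - y * Real.sin (2 * π / n))
        (x * Real.sin (2 * π / n) + y * Real.cos (2 * π / n)) = f t x y := by
  intro t x y
  set θ : ℝ := 2 * π / n
  set ω : ℂ := exp (θ * I)
  have hω : ω ^ n = 1 := by
    have hθ : (θ : ℂ) * I = 2 * π * I / n := by push_cast [θ]; ring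
    simpa only [ω, hθ] using (isPrimitiveRoot_exp n (NeZero.ne n)).pow_eq_one
  have hd (i : Fin n) : ω ^ ((i + 1 : Fin n) : ℕ) = ω * ω ^ (i : ℕ) :=
    pow_val_add_one_of_pow_eq_one hω i
  have hD : IsUnit (diagonal fun i : Fin n => ω ^ (i : ℕ)).det := by
    rw [det_diagonal, isUnit_iff_ne_zero, Finset.prod_ne_zero_iff]
    exact fun i _ => pow_ne_zero _ (exp_ne_zero _)
  subst hA hRe hIm
  rw [hf, hf, smul_one_add_smul_re_add_smul_im, smul_one_add_smul_re_add_smul_im,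
    ofReal_rotate_add_mul_I, ← ofReal_rotate_sub_mul_I θ x y, mul_div_assoc, mul_div_assoc]
  exact det_pencil_eq_of_mul_eq_smul_mul (cyclicShift_mul_diagonal a hd)
    (diagonal_mul_cyclicShift_conjTranspose a hd) hD _ _ _
end

section
/- For n ≥ 1, the dimension of the space of degree-n homogeneous polynomials in ℂ[t,u,v] that are invariant under the map (t,u,v) ↦ (t, ωu, ω^{−1}v), where ω = e^{2πi/n}, equals ⌊n/2⌋ + 3. -/
open MvPolynomial Complex Real

/-! The substitution is diagonal in the monomial basis: it multiplies `t^i u^j v^k` by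
`ω^j ω⁻¹^k`. Hence the invariant homogeneous polynomials of degree `n` are exactly those
supported on exponents with `i + j + k = n` and `ω^j = ω^k`, i.e. `j ≡ k [MOD n]`, and the
dimension is the number of such exponents. As `j + k ≤ n`, either `j = k` (the `⌊n/2⌋ + 1`
monomials `t^(n-2j) u^j v^j`) or `{j, k} = {0, n}` (the monomials `u^n` and `v^n`). -/

namespace MvPolynomial

variable {σ R : Type*}

section CommSemiring

variable [CommSemiring R]

theorem aeval_C_mul_X_monomial (c : σ → R) (d : σ →₀ ℕ) (a : R) :
    aeval (fun i => C (c i) * X i) (monomial d a) =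
      monomial d ((d.prod fun i k => c i ^ k) * a) := by
  rw [aeval_monomial, monomial_eq, algebraMap_eq, C_mul]
  simp only [mul_pow, Finsupp.prod_mul, map_finsuppProd, C_pow]
  ring

theorem coeff_aeval_C_mul_X (c : σ → R) (d : σ →₀ ℕ) (p : MvPolynomial σ R) :
    coeff d (aeval (fun i => C (c i) * X i) p) = (d.prod fun i k => c i ^ k) * coeff d p := by
  classical
  induction p using MvPolynomial.induction_on' with
  | monomial e a =>
    rw [aeval_C_mul_X_monomial, coeff_monomial, coeff_monomial]
    split_ifs with h <;> simp [h]
  | add p q hp hq => simp only [map_add, coeff_add, hp, hq, mul_add]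

theorem restrictSupport_inf (s t : Set (σ →₀ ℕ)) :
    restrictSupport R s ⊓ restrictSupport R t = restrictSupport R (s ∩ t) := by
  ext p
  simp only [Submodule.mem_inf, mem_restrictSupport_iff, Set.subset_inter_iff]

theorem homogeneousSubmodule_eq_restrictSupport (n : ℕ) :
    homogeneousSubmodule σ R n = restrictSupport R {d | d.degree = n} :=
  homogeneousSubmodule_eq_finsupp_supported σ R n

end CommSemiring

theorem finrank_restrictSupport [CommRing R] [Nontrivial R] (s : Finset (σ →₀ ℕ)) :
    Module.finrank R (restrictSupport R (s : Set (σ →₀ ℕ))) = s.card := by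
  rw [Module.finrank_eq_nat_card_basis (basisRestrictSupport R _), Nat.card_coe_set_eq,
    Set.ncard_coe_finset]

theorem ker_aeval_C_mul_X_sub_id [CommRing R] [IsDomain R] (c : σ → R) :
    LinearMap.ker ((aeval fun i => C (c i) * X i).toLinearMap - LinearMap.id) =
      restrictSupport R {d | (d.prod fun i k => c i ^ k) = 1} := by
  ext p
  simp only [LinearMap.mem_ker, LinearMap.sub_apply, AlgHom.toLinearMap_apply, LinearMap.id_apply,
    sub_eq_zero, mem_restrictSupport_iff, Set.subset_def, Finset.mem_coe, mem_support_iff,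
    Set.mem_ofPred_eq, MvPolynomial.ext_iff, coeff_aeval_C_mul_X]
  refine forall_congr' fun d => ?_
  constructor
  · intro h hd
    exact mul_right_cancel₀ hd (h.trans (one_mul _).symm)
  · intro h
    by_cases hd : coeff d p = 0
    · simp [hd]
    · rw [h hd, one_mul]

end MvPolynomial

theorem IsPrimitiveRoot.pow_eq_pow_iff_of_add_le {M : Type*} [CommMonoid M] {ζ : M} {n j k : ℕ}
    (h : IsPrimitiveRoot ζ n) (hjk : j + k ≤ n) :
    ζ ^ j = ζ ^ k ↔ j = k ∨ (j = 0 ∧ k = n) ∨ (j = n ∧ k = 0) := by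
  constructor
  · intro hζ
    by_cases hj : j < n
    · by_cases hk : k < n
      · exact Or.inl (h.pow_inj hj hk hζ)
      · omega
    · omega
  · rintro (rfl | ⟨rfl, rfl⟩ | ⟨rfl, rfl⟩) <;> simp [h.pow_eq_one]

noncomputable def triple (a b c : ℕ) : Fin 3 →₀ ℕ := Finsupp.equivFunOnFinite.symm ![a, b, c]

@[simp]
theorem triple_apply (a b c : ℕ) (i : Fin 3) : triple a b c i = ![a, b, c] i := rfl

theorem triple_eq_iff {a b c : ℕ} {d : Fin 3 →₀ ℕ} :
    triple a b c = d ↔ a = d 0 ∧ b = d 1 ∧ c = d 2 := by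
  simp [triple, Finsupp.ext_iff, Fin.forall_fin_succ]

theorem degree_fin_three (d : Fin 3 →₀ ℕ) : d.degree = d 0 + d 1 + d 2 := by
  rw [Finsupp.degree_eq_sum, Fin.sum_univ_three]

theorem prod_fin_three_pow {M : Type*} [CommMonoid M] (c : Fin 3 → M) (d : Fin 3 →₀ ℕ) :
    (d.prod fun i k => c i ^ k) = c 0 ^ d 0 * c 1 ^ d 1 * c 2 ^ d 2 := by
  rw [Finsupp.prod_fintype _ _ fun _ => pow_zero _, Fin.prod_univ_three]

noncomputable def invariantExponents (n : ℕ) : Finset (Fin 3 →₀ ℕ) :=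
  insert (triple 0 n 0) <| insert (triple 0 0 n) <|
    (Finset.range (n / 2 + 1)).image fun j => triple (n - 2 * j) j j

theorem mem_invariantExponents {n : ℕ} {d : Fin 3 →₀ ℕ} :
    d ∈ invariantExponents n ↔
      d 0 + d 1 + d 2 = n ∧ (d 1 = d 2 ∨ (d 1 = 0 ∧ d 2 = n) ∨ (d 1 = n ∧ d 2 = 0)) := by
  simp only [invariantExponents, Finset.mem_insert, Finset.mem_image, Finset.mem_range,
    eq_comm (a := d), triple_eq_iff]
  constructor
  · rintro (h | h | ⟨j, hj, h⟩) <;> omega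
  · rintro ⟨hsum, h | h | h⟩
    · exact Or.inr (Or.inr ⟨d 1, by omega⟩)
    all_goals omega

theorem card_invariantExponents {n : ℕ} (hn : n ≠ 0) :
    (invariantExponents n).card = n / 2 + 3 := by
  have hinj : Set.InjOn (fun j => triple (n - 2 * j) j j) (Finset.range (n / 2 + 1)) :=
    fun i _ j _ h => by simpa using (triple_eq_iff.mp h).2.1
  rw [invariantExponents, Finset.card_insert_of_notMem, Finset.card_insert_of_notMem,
    Finset.card_image_of_injOn hinj, Finset.card_range]
  all_goals
    simp only [Finset.mem_insert, Finset.mem_image, triple_eq_iff, triple_apply,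
      Matrix.cons_val_zero, Matrix.cons_val_one, Matrix.cons_val_two, Matrix.tail_cons,
      Matrix.head_cons]
    omega

theorem coe_invariantExponents {K : Type*} [Field K] {n : ℕ} {ω : K} (hω : IsPrimitiveRoot ω n)
    (hn : n ≠ 0) :
    (invariantExponents n : Set (Fin 3 →₀ ℕ)) =
      {d | d.degree = n} ∩ {d | (d.prod fun i k => ![1, ω, ω⁻¹] i ^ k) = 1} := by
  ext d
  have hω0 : ω ≠ 0 := hω.ne_zero hn
  simp only [Finset.mem_coe, mem_invariantExponents, Set.mem_inter_iff, Set.mem_ofPred_eq,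
    degree_fin_three, prod_fin_three_pow, Matrix.cons_val_zero, Matrix.cons_val_one,
    Matrix.cons_val_two, Matrix.tail_cons, Matrix.head_cons, one_pow, one_mul, inv_pow,
    mul_inv_eq_one₀ (pow_ne_zero _ hω0)]
  exact and_congr_right fun hsum => (hω.pow_eq_pow_iff_of_add_le (by omega)).symm

/-- The space of degree-`n` homogeneous polynomials in `ℂ[t,u,v]` invariant under
`(t,u,v) ↦ (t, ωu, ω⁻¹v)`, `ω = e^{2πi/n}`, has dimension `⌊n/2⌋ + 3`. -/
theorem stmt6 (n : ℕ) (hn : 1 ≤ n)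
    (ω : ℂ) (hω : ω = Complex.exp (2 * π * Complex.I / n))
    (σ : MvPolynomial (Fin 3) ℂ →ₐ[ℂ] MvPolynomial (Fin 3) ℂ)
    (hσ : σ = MvPolynomial.aeval
      ![MvPolynomial.X 0, MvPolynomial.C ω * MvPolynomial.X 1,
        MvPolynomial.C ω⁻¹ * MvPolynomial.X 2]) :
    Module.finrank ℂ
      ↥(MvPolynomial.homogeneousSubmodule (Fin 3) ℂ n ⊓
        LinearMap.ker (σ.toLinearMap - LinearMap.id)) = n / 2 + 3 := by
  have hn0 : n ≠ 0 := by omega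
  have hζ : IsPrimitiveRoot ω n := hω ▸ Complex.isPrimitiveRoot_exp n hn0
  have hσ_diag : σ = aeval fun i => C (![1, ω, ω⁻¹] i) * X i := by
    rw [hσ]
    congr 1
    funext i
    fin_cases i <;> simp
  rw [hσ_diag, ker_aeval_C_mul_X_sub_id, homogeneousSubmodule_eq_restrictSupport,
    restrictSupport_inf, ← coe_invariantExponents hζ hn0, finrank_restrictSupport,
    card_invariantExponents hn0]
end

section
/- Let f = t^n + Σ_{r=1}^{⌊n/2⌋} c_r t^{n−2r}(uv)^r + c_0·(u^n+v^n)/2 + c̃_0·(u^n−v^n)/(2i) with real c_r, c_0, c̃_0. Then f is hyperbolic with respect to (1,0,0) (in the (t,x,y)-coordinates with u = x+iy, v = x−iy) if and only if both univariate polynomials t^n + Σ_{r=1}^{⌊n/2⌋} c_r t^{n−2r} + √(c_0² + c̃_0²) and t^n + Σ_{r=1}^{⌊n/2⌋} c_r t^{n−2r} − √(c_0² + c̃_0²) have all real roots. -/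
/-!
On the unit circle `f(t, e^{iθ}, e^{-iθ}) = p(t) + s(θ)` with `s(θ) = c₀ cos nθ + c̃₀ sin nθ`, and
`s` takes exactly the values in `[-R, R]`, `R = √(c₀² + c̃₀²)`. So it suffices that if `p + a` and
`p + b` are real-rooted then so is `p + s` for `a ≤ s ≤ b`. For real-rooted `g` and nonreal `z`,
`g'(z)/g(z) = Σ 1/(z - rᵢ)` gives `Im z · Im (g'(z)/g(z)) < 0`. If `z ∉ ℝ` were a root of `p + s`,
then `g = p + u` has `g'(z) = p'(z)` and `g(z) = u - s`, so `Im z · Im p'(z) / (u - s) < 0` for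
both `u = a` and `u = b`, which is impossible as `a - s ≤ 0 ≤ b - s`.
-/

open Polynomial Real

theorem Real.abs_mul_cos_add_mul_sin_le (a b x : ℝ) : |a * cos x + b * sin x| ≤ √(a ^ 2 + b ^ 2) :=
  abs_le_sqrt <| by nlinarith [sin_sq_add_cos_sq x, sq_nonneg (a * sin x - b * cos x)]

theorem Real.exists_mul_cos_add_mul_sin_eq_sqrt (a b : ℝ) :
    ∃ φ, a * cos φ + b * sin φ = √(a ^ 2 + b ^ 2) := by
  obtain ⟨z, hre, him⟩ : ∃ z : ℂ, z.re = a ∧ z.im = b := ⟨⟨a, b⟩, rfl, rfl⟩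
  have hnorm : ‖z‖ = √(a ^ 2 + b ^ 2) := by
    rw [Complex.norm_def, Complex.normSq_apply, hre, him, sq, sq]
  have hcos : ‖z‖ * cos z.arg = a := hre ▸ Complex.norm_mul_cos_arg z
  have hsin : ‖z‖ * sin z.arg = b := him ▸ Complex.norm_mul_sin_arg z
  refine ⟨z.arg, ?_⟩
  rw [← hnorm]
  linear_combination (-cos z.arg) * hcos - sin z.arg * hsin + ‖z‖ * sin_sq_add_cos_sq z.arg

theorem Real.exists_mem_Ico_cos_mul_eq_and_sin_mul_eq {n : ℕ} (hn : 0 < n) (φ : ℝ) :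
    ∃ θ ∈ Set.Ico 0 (2 * π), cos (n * θ) = cos φ ∧ sin (n * θ) = sin φ := by
  obtain ⟨hψ0, hψ⟩ := toIcoMod_mem_Ico' two_pi_pos φ
  have hnθ : (n : ℝ) * (toIcoMod two_pi_pos 0 φ / n) = toIcoMod two_pi_pos 0 φ :=
    mul_div_cancel₀ _ (by positivity)
  refine ⟨toIcoMod two_pi_pos 0 φ / n, ⟨by positivity, ?_⟩, ?_, ?_⟩
  · exact (div_le_self hψ0 (by exact_mod_cast hn)).trans_lt hψ
  all_goals rw [hnθ, toIcoMod, zsmul_eq_mul]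
  · exact cos_sub_int_mul_two_pi φ _
  · exact sin_sub_int_mul_two_pi φ _

theorem Polynomial.natDegree_X_pow_add_sum_Icc {R : Type*} [Semiring R] [Nontrivial R] (n : ℕ)
    (c : ℕ → R) :
    (X ^ n + ∑ r ∈ Finset.Icc 1 (n / 2), C (c r) * X ^ (n - 2 * r)).natDegree = n := by
  have hlt : (∑ r ∈ Finset.Icc 1 (n / 2), C (c r) * X ^ (n - 2 * r)).degree < (n : WithBot ℕ) := by
    refine (degree_sum_le _ _).trans_lt <| (Finset.sup_lt_iff (WithBot.bot_lt_coe n)).mpr ?_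
    intro r hr
    have hr := Finset.mem_Icc.mp hr
    exact (degree_C_mul_X_pow_le _ _).trans_lt (Nat.cast_lt.mpr (by omega))
  rw [natDegree_add_eq_left_of_degree_lt (by rwa [degree_X_pow]), natDegree_X_pow]

theorem Polynomial.Splits.im_mul_im_eval_derivative_div_eval_neg {g : ℝ[X]} (hg : g.Splits)
    (hg0 : g.natDegree ≠ 0) {z : ℂ} (hz : z.im ≠ 0) :
    z.im * ((g.map (algebraMap ℝ ℂ)).derivative.eval z /
      (g.map (algebraMap ℝ ℂ)).eval z).im < 0 := by
  have hroots := hg.roots_map (algebraMap ℝ ℂ)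
  have heval : (g.map (algebraMap ℝ ℂ)).eval z ≠ 0 := by
    intro h
    have hg0' : g ≠ 0 := by rintro rfl; simp at hg0
    rw [← IsRoot, ← mem_roots (map_ne_zero hg0'), hroots] at h
    obtain ⟨r, -, rfl⟩ := Multiset.mem_map.mp h
    simp at hz
  have hterm : ∀ r ∈ g.roots, z.im * (1 / (z - algebraMap ℝ ℂ r)).im < 0 := fun r _ => by
    have hpos : 0 < Complex.normSq (z - algebraMap ℝ ℂ r) :=
      Complex.normSq_pos.mpr fun h => hz (by simpa using congrArg Complex.im h)
    rw [one_div, Complex.inv_im, Complex.sub_im, Complex.coe_algebraMap, Complex.ofReal_im,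
      sub_zero, mul_div_assoc', mul_neg, neg_div, neg_lt_zero]
    exact div_pos (mul_self_pos.mpr hz) hpos
  rw [(hg.map _).eval_derivative_div_eval_of_ne_zero heval, hroots, Multiset.map_map,
    ← Complex.coe_imAddGroupHom, map_multiset_sum, Multiset.map_map, ← Multiset.sum_map_mul_left]
  simpa using Multiset.sum_lt_sum_of_nonempty (hg.roots_ne_zero hg0) hterm

theorem Polynomial.exists_im_ne_zero_isRoot_map_of_not_splits {f : ℝ[X]} (hf : ¬f.Splits) :
    ∃ z : ℂ, z.im ≠ 0 ∧ (f.map (algebraMap ℝ ℂ)).IsRoot z := by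
  contrapose! hf
  refine Splits.of_splits_map (algebraMap ℝ ℂ) (IsAlgClosed.splits _) fun z hz => ?_
  have hzim : z.im = 0 := by
    by_contra h
    exact hf z h (isRoot_of_mem_roots hz)
  exact ⟨z.re, Complex.ext (by simp) (by simp [hzim])⟩

theorem Polynomial.splits_add_C_of_le_of_le {q : ℝ[X]} {a b s : ℝ} (ha : (q + C a).Splits)
    (hb : (q + C b).Splits) (has : a ≤ s) (hsb : s ≤ b) : (q + C s).Splits := by
  by_cases hq : q.natDegree = 0
  · exact Splits.of_natDegree_eq_zero (by rwa [natDegree_add_C])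
  by_contra hs
  obtain ⟨z, hz, hroot⟩ := exists_im_ne_zero_isRoot_map_of_not_splits hs
  set w := z.im * ((q.map (algebraMap ℝ ℂ)).derivative.eval z).im
  have hsign : ∀ u, (q + C u).Splits → w / (u - s) < 0 := by
    intro u hu
    have h := hu.im_mul_im_eval_derivative_div_eval_neg (by rwa [natDegree_add_C]) hz
    have heval : ((q + C u).map (algebraMap ℝ ℂ)).eval z = ((u - s : ℝ) : ℂ) := by
      simp only [IsRoot, Polynomial.map_add, map_C, eval_add, eval_C] at hroot ⊢
      push_cast
      linear_combination hroot
    rwa [heval, Polynomial.map_add, derivative_add, map_C, derivative_C, add_zero,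
      Complex.div_ofReal_im, mul_div_assoc'] at h
  rcases div_neg_iff.mp (hsign a ha) with ⟨hw, has'⟩ | ⟨hw, has'⟩ <;>
  rcases div_neg_iff.mp (hsign b hb) with ⟨hw', hsb'⟩ | ⟨hw', hsb'⟩ <;> linarith

/-- For `f = tⁿ + Σ c_r t^{n−2r}(uv)^r + c₀(uⁿ+vⁿ)/2 + c̃₀(uⁿ−vⁿ)/(2i)`,
hyperbolicity w.r.t. `(1,0,0)` — i.e. `f(t,e^{iθ},e^{−iθ}) = p(t) + c₀cos(nθ) + c̃₀sin(nθ)`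
has all real roots for every `θ` — is equivalent to `p ± √(c₀² + c̃₀²)` having all real roots. -/
theorem stmt11 (n : ℕ) (hn : 1 ≤ n) (c : ℕ → ℝ) (c0 ctil : ℝ)
    (p : Polynomial ℝ)
    (hp : p = X ^ n + ∑ r ∈ Finset.Icc 1 (n / 2), C (c r) * X ^ (n - 2 * r)) :
    (∀ θ : ℝ, θ ∈ Set.Ico 0 (2 * π) →
        (p + C (c0 * Real.cos (n * θ) + ctil * Real.sin (n * θ))).roots.card = n) ↔
      ((p + C (Real.sqrt (c0 ^ 2 + ctil ^ 2))).roots.card = n ∧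
        (p - C (Real.sqrt (c0 ^ 2 + ctil ^ 2))).roots.card = n) := by
  have hcard (t : ℝ) : (p + C t).roots.card = n ↔ (p + C t).Splits := by
    rw [splits_iff_card_roots, natDegree_add_C, hp, natDegree_X_pow_add_sum_Icc]
  simp only [sub_eq_add_neg, ← C_neg, hcard]
  constructor
  · intro h
    obtain ⟨φ, hφ⟩ := exists_mul_cos_add_mul_sin_eq_sqrt c0 ctil
    obtain ⟨θ₁, hθ₁, hcos₁, hsin₁⟩ := exists_mem_Ico_cos_mul_eq_and_sin_mul_eq hn φ
    obtain ⟨θ₂, hθ₂, hcos₂, hsin₂⟩ := exists_mem_Ico_cos_mul_eq_and_sin_mul_eq hn (φ + π)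
    have hφπ : c0 * cos (φ + π) + ctil * sin (φ + π) = -√(c0 ^ 2 + ctil ^ 2) := by
      rw [cos_add_pi, sin_add_pi, ← hφ]; ring
    constructor
    · simpa only [hcos₁, hsin₁, hφ] using h θ₁ hθ₁
    · simpa only [hcos₂, hsin₂, hφπ] using h θ₂ hθ₂
  · rintro ⟨hplus, hminus⟩ θ -
    obtain ⟨hl, hr⟩ := abs_le.mp (abs_mul_cos_add_mul_sin_le c0 ctil (n * θ))
    exact splits_add_C_of_le_of_le hminus hplus hl hr
end

section
/- Let p(t) = t^n + Σ_{r=1}^{⌊n/2⌋} c_r t^{n−2r} with real coefficients and s ≥ 0. If both p(t)+s and p(t)−s have all real distinct roots, then for every θ, the polynomial p(t) + s·cos(θ) has all real distinct roots. -/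
/-!
Let `f` have degree `n`. If `f - a` has `n` simple real roots, Rolle's theorem puts a critical
point of `f` strictly between any two consecutive ones; as `f'` has at most `n - 1` roots, these are
all the critical points. Hence the `k`-th roots `xₖ` of `f - a` and `yₖ` of `f - b` both lie between
the `(k-1)`-th and the `k`-th critical point, and the intermediate value theorem gives a root of
`f - c` between `xₖ` and `yₖ` for every `c` between `a` and `b`: `n` distinct roots in all.
-/

open Polynomial Set

lemma StrictMono.eq_of_forall_mem_of_card_le {α : Type*} [LinearOrder α] {s : Finset α} {m : ℕ}
    (hs : s.card ≤ m) {f g : Fin m → α} (hf : StrictMono f) (hg : StrictMono g) (hfs : ∀ i, f i ∈ s)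
    (hgs : ∀ i, g i ∈ s) : f = g := by
  have hcard : s.card = m := by
    refine le_antisymm hs ?_
    simpa [Finset.card_image_of_injective _ hf.injective] using
      Finset.card_le_card (s := Finset.univ.image f) (by simpa [Finset.image_subset_iff])
  rw [Finset.orderEmbOfFin_unique hcard hfs hf, Finset.orderEmbOfFin_unique hcard hgs hg]

namespace Polynomial

lemma exists_strictMono_eval_eq {R : Type*} [CommRing R] [IsDomain R] [LinearOrder R]
    {f : R[X]} {a : R} {n : ℕ} (hcard : (f - C a).roots.card = n)
    (hnodup : (f - C a).roots.Nodup) : ∃ x : Fin n → R, StrictMono x ∧ ∀ i, f.eval (x i) = a := by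
  have hn : (f - C a).roots.toFinset.card = n := by
    rw [Multiset.toFinset_card_of_nodup hnodup, hcard]
  refine ⟨_, (Finset.orderEmbOfFin _ hn).strictMono, fun i => ?_⟩
  have := isRoot_of_mem_roots (Multiset.mem_toFinset.mp (Finset.orderEmbOfFin_mem _ hn i))
  rwa [IsRoot, eval_sub, eval_C, sub_eq_zero] at this

lemma card_roots_sub_C_eq {R : Type*} [CommRing R] [IsDomain R] {f : R[X]} {c : R} {n : ℕ}
    (hf : f.natDegree = n) {w : Fin n → R} (hw : Function.Injective w)
    (hwc : ∀ i, f.eval (w i) = c) :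
    (f - C c).roots.card = n ∧ (f - C c).roots.Nodup := by
  classical
  rcases eq_or_ne (f - C c) 0 with h0 | h0
  · rw [← natDegree_sub_C (a := c), h0, natDegree_zero] at hf
    simp [h0, ← hf]
  have hsub : Finset.univ.image w ⊆ (f - C c).roots.toFinset := by
    simp [Finset.image_subset_iff, mem_roots h0, hwc]
  have hle : n ≤ (f - C c).roots.toFinset.card := by
    simpa [Finset.card_image_of_injective _ hw] using Finset.card_le_card hsub
  have hge : (f - C c).roots.card ≤ n := hf ▸ natDegree_sub_C (a := c) ▸ card_roots' _
  have := Multiset.toFinset_card_le (f - C c).roots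
  exact ⟨by omega, Multiset.toFinset_card_eq_card_iff_nodup.mp (by omega)⟩

lemma exists_strictMono_derivative_isRoot_between {f : ℝ[X]} {m : ℕ} {a : ℝ}
    {x : Fin (m + 1) → ℝ} (hx : StrictMono x) (hxa : ∀ i, f.eval (x i) = a) :
    ∃ ρ : Fin m → ℝ, StrictMono ρ ∧
      ∀ i, x i.castSucc < ρ i ∧ ρ i < x i.succ ∧ f.derivative.IsRoot (ρ i) := by
  have hrolle (i : Fin m) :
      ∃ r ∈ Ioo (x i.castSucc) (x i.succ), f.derivative.IsRoot r := by
    obtain ⟨r, hr, hr0⟩ := exists_deriv_eq_zero (hx Fin.castSucc_lt_succ)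
      f.continuousOn ((hxa _).trans (hxa _).symm)
    exact ⟨r, hr, by rwa [Polynomial.deriv] at hr0⟩
  choose ρ hρ hρ0 using hrolle
  refine ⟨ρ, fun i j hij => ?_, fun i => ⟨(hρ i).1, (hρ i).2, hρ0 i⟩⟩
  calc ρ i < x i.succ := (hρ i).2
    _ ≤ x j.castSucc := hx.monotone (Fin.succ_le_castSucc_iff.mpr hij)
    _ < ρ j := (hρ j).1

lemma lt_succ_of_strictMono_level_sets {f : ℝ[X]} {m : ℕ} (hf : f.natDegree = m + 1) {a b : ℝ}
    {x y : Fin (m + 1) → ℝ} (hx : StrictMono x) (hy : StrictMono y)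
    (hxa : ∀ i, f.eval (x i) = a) (hyb : ∀ i, f.eval (y i) = b) (i : Fin m) :
    x i.castSucc < y i.succ := by
  obtain ⟨ρ, hρ, hρx⟩ := exists_strictMono_derivative_isRoot_between hx hxa
  obtain ⟨σ, hσ, hσy⟩ := exists_strictMono_derivative_isRoot_between hy hyb
  have hf' : f.derivative ≠ 0 := fun h => by
    have := derivative_eq_zero.mp h; omega
  have hcard : f.derivative.roots.toFinset.card ≤ m := calc
    _ ≤ f.derivative.roots.card := Multiset.toFinset_card_le _
    _ ≤ f.derivative.natDegree := card_roots' _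
    _ ≤ m := by have := natDegree_derivative_le f; omega
  have hρσ : ρ = σ := hρ.eq_of_forall_mem_of_card_le hcard hσ
    (fun j => by simpa [mem_roots hf'] using (hρx j).2.2)
    (fun j => by simpa [mem_roots hf'] using (hσy j).2.2)
  calc x i.castSucc < ρ i := (hρx i).1
    _ = σ i := by rw [hρσ]
    _ < y i.succ := (hσy i).2.1

theorem card_roots_sub_C_of_mem_Icc {f : ℝ[X]} {n : ℕ} (hf : f.natDegree = n) {a b c : ℝ}
    (hc : c ∈ Icc a b)
    (ha : (f - C a).roots.card = n ∧ (f - C a).roots.Nodup)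
    (hb : (f - C b).roots.card = n ∧ (f - C b).roots.Nodup) :
    (f - C c).roots.card = n ∧ (f - C c).roots.Nodup := by
  obtain ⟨x, hx, hxa⟩ := exists_strictMono_eval_eq ha.1 ha.2
  obtain ⟨y, hy, hyb⟩ := exists_strictMono_eval_eq hb.1 hb.2
  have hivt (i : Fin n) : ∃ t ∈ uIcc (x i) (y i), f.eval t = c :=
    intermediate_value_uIcc f.continuousOn (by rw [hxa, hyb]; exact Icc_subset_uIcc hc)
  choose w hw hwc using hivt
  refine card_roots_sub_C_eq hf (StrictMono.injective ?_) hwc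
  rcases n with _ | m
  · exact fun i => i.elim0
  refine Fin.strictMono_iff_lt_succ.mpr fun i => ?_
  calc w i.castSucc ≤ max (x i.castSucc) (y i.castSucc) := (hw _).2
    _ < min (x i.succ) (y i.succ) :=
      max_lt
        (lt_min (hx Fin.castSucc_lt_succ) (lt_succ_of_strictMono_level_sets hf hx hy hxa hyb i))
        (lt_min (lt_succ_of_strictMono_level_sets hf hy hx hyb hxa i) (hy Fin.castSucc_lt_succ))
    _ ≤ w i.succ := (hw _).1

lemma natDegree_X_pow_add_sum_C_mul_X_pow_sub {R : Type*} [Semiring R] [Nontrivial R] (n : ℕ)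
    (c : ℕ → R) : (X ^ n + ∑ r ∈ Finset.Icc 1 (n / 2), C (c r) * X ^ (n - 2 * r)).natDegree = n := by
  have hlt :
      (∑ r ∈ Finset.Icc 1 (n / 2), C (c r) * X ^ (n - 2 * r)).degree < (n : WithBot ℕ) := by
    refine (degree_sum_le _ _).trans_lt <| (Finset.sup_lt_iff (WithBot.bot_lt_coe n)).mpr ?_
    intro r hr
    have : n - 2 * r < n := by rw [Finset.mem_Icc] at hr; omega
    exact (degree_C_mul_X_pow_le _ _).trans_lt (WithBot.coe_lt_coe.mpr this)
  rw [natDegree_add_eq_left_of_degree_lt (by rwa [degree_X_pow]), natDegree_X_pow]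

end Polynomial

theorem stmt12_general (n : ℕ) (c : ℕ → ℝ) (s : ℝ) (hs : 0 ≤ s)
    (p : Polynomial ℝ)
    (hp : p = X ^ n + ∑ r ∈ Finset.Icc 1 (n / 2), C (c r) * X ^ (n - 2 * r))
    (hplus : (p + C s).roots.card = n ∧ (p + C s).roots.Nodup)
    (hminus : (p - C s).roots.card = n ∧ (p - C s).roots.Nodup) :
    ∀ θ : ℝ, (p + C (s * Real.cos θ)).roots.card = n ∧ (p + C (s * Real.cos θ)).roots.Nodup := by
  intro θ
  have hdeg : p.natDegree = n := hp ▸ natDegree_X_pow_add_sum_C_mul_X_pow_sub n c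
  have hmem : -(s * Real.cos θ) ∈ Icc (-s) s :=
    ⟨by nlinarith [Real.cos_le_one θ], by nlinarith [Real.neg_one_le_cos θ]⟩
  simpa only [map_neg, sub_neg_eq_add] using
    card_roots_sub_C_of_mem_Icc hdeg hmem (by simpa only [map_neg, sub_neg_eq_add]) hminus

/-- If `p ± s` have all real distinct roots (`s ≥ 0`), then `p + s·cos θ` has all
real distinct roots for every `θ`, where `p = tⁿ + Σ c_r t^{n−2r}`. -/
theorem stmt12 (n : ℕ) (hn : 1 ≤ n) (c : ℕ → ℝ) (s : ℝ) (hs : 0 ≤ s)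
    (p : Polynomial ℝ)
    (hp : p = X ^ n + ∑ r ∈ Finset.Icc 1 (n / 2), C (c r) * X ^ (n - 2 * r))
    (hplus : (p + C s).roots.card = n ∧ (p + C s).roots.Nodup)
    (hminus : (p - C s).roots.card = n ∧ (p - C s).roots.Nodup) :
    ∀ θ : ℝ, (p + C (s * Real.cos θ)).roots.card = n ∧ (p + C (s * Real.cos θ)).roots.Nodup :=
  stmt12_general n c s hs p hp hplus hminus
end

section
/- Let f(t,u,v) = t^n + Σ_{r=1}^{⌊n/2⌋} c_r t^{n−2r}(uv)^r with n odd and real coefficients c_r, and suppose ∂f/∂t(t, e^{iθ}, e^{−iθ}) has all real roots in t for every θ. Then ∂f/∂t factors as a product over j = 1,...,(n−1)/2 of quadrics t² − s_j·uv with s_j ∈ ℝ_{≥0}. -/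
/-!
Write `n = 2m + 1`. Then `∂f/∂t (t, u, v) = G(t², uv)`, where `G` is the degree-`m`
homogenization of a univariate polynomial `g` of degree `m` with leading coefficient `n`.
Over `ℂ`, `g = n ∏ⱼ (x - sⱼ)`, hence `∂f/∂t = n ∏ⱼ (t² - sⱼ uv)`. At `θ = 0` hyperbolicity says
that every root of `n ∏ⱼ (t² - sⱼ)` is real; applied to a square root `t` of `sⱼ` this gives
`sⱼ = t²` with `t` real, so `sⱼ ≥ 0`.
-/

open MvPolynomial Complex

open scoped Polynomial

theorem Multiset.exists_fin_map_eq {α : Type*} (s : Multiset α) :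
    ∃ z : Fin (Multiset.card s) → α, Finset.univ.val.map z = s := by
  refine ⟨fun i => s.toList.get (Fin.cast (by simp) i), ?_⟩
  rw [Fin.univ_val_map]
  conv_rhs => rw [← s.coe_toList]
  exact congrArg _ (List.ext_get (by simp) fun _ _ _ => by simp)

namespace Polynomial

theorem exists_eq_C_leadingCoeff_mul_prod_X_sub_C {K : Type*} [Field K] [IsAlgClosed K]
    {p : K[X]} {m : ℕ} (hp : p.natDegree = m) :
    ∃ z : Fin m → K, p = C p.leadingCoeff * ∏ i, (X - C (z i)) := by
  have hsplit := IsAlgClosed.splits p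
  have hcard : Multiset.card p.roots = m := by
    rw [← hp, splits_iff_card_roots.mp hsplit]
  subst hcard
  obtain ⟨z, hz⟩ := p.roots.exists_fin_map_eq
  refine ⟨z, ?_⟩
  conv_lhs => rw [hsplit.eq_prod_roots, ← hz, Multiset.map_map]
  rfl

theorem homogenize_C_mul_prod_X_sub_C {R ι : Type*} [CommRing R] (a : R) (s : Finset ι)
    (z : ι → R) :
    (C a * ∏ i ∈ s, (X - C (z i))).homogenize s.card =
      MvPolynomial.C a *
        ∏ i ∈ s, (MvPolynomial.X 0 - MvPolynomial.C (z i) * MvPolynomial.X 1) := by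
  rw [homogenize_C_mul, Finset.card_eq_sum_ones,
    homogenize_finsetProd fun i _ => natDegree_X_sub_C_le (z i)]
  simp [homogenize_sub]

end Polynomial

/-- With `n = 2m + 1`, `∂f/∂t (t, u, v) = (uv)ᵐ · pderivProfile m c (t² / uv)`. -/
noncomputable def pderivProfile (m : ℕ) (c : ℕ → ℝ) : ℂ[X] :=
  Polynomial.C ((2 * m + 1 : ℕ) : ℂ) * Polynomial.X ^ m +
    ∑ r ∈ Finset.Icc 1 m,
      Polynomial.C (((2 * m + 1 - 2 * r : ℕ) : ℂ) * c r) * Polynomial.X ^ (m - r)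

theorem coeff_pderivProfile_self (m : ℕ) (c : ℕ → ℝ) :
    (pderivProfile m c).coeff m = (2 * m + 1 : ℕ) := by
  rw [pderivProfile, Polynomial.coeff_add, Polynomial.coeff_C_mul_X_pow, if_pos rfl,
    Polynomial.finsetSum_coeff, Finset.sum_eq_zero, add_zero]
  intro r hr
  rw [Polynomial.coeff_C_mul_X_pow, if_neg (by grind)]

theorem natDegree_pderivProfile (m : ℕ) (c : ℕ → ℝ) : (pderivProfile m c).natDegree = m := by
  refine le_antisymm ?_ (Polynomial.le_natDegree_of_ne_zero ?_)
  · refine Polynomial.natDegree_add_le_of_degree_le (Polynomial.natDegree_C_mul_X_pow_le _ _) ?_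
    exact Polynomial.natDegree_sum_le_of_forall_le _ _ fun r _ =>
      (Polynomial.natDegree_C_mul_X_pow_le _ _).trans (Nat.sub_le m r)
  · rw [coeff_pderivProfile_self]
    exact Nat.cast_ne_zero.mpr (Nat.succ_ne_zero _)

theorem leadingCoeff_pderivProfile (m : ℕ) (c : ℕ → ℝ) :
    (pderivProfile m c).leadingCoeff = (2 * m + 1 : ℕ) := by
  rw [Polynomial.leadingCoeff, natDegree_pderivProfile, coeff_pderivProfile_self]

theorem pderiv_zero_eq_aeval_homogenize (m : ℕ) (c : ℕ → ℝ) :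
    pderiv 0 (X 0 ^ (2 * m + 1) + ∑ r ∈ Finset.Icc 1 ((2 * m + 1) / 2),
        C (c r : ℂ) * X 0 ^ (2 * m + 1 - 2 * r) * (X 1 * X 2) ^ r : MvPolynomial (Fin 3) ℂ) =
      aeval ![X 0 ^ 2, X 1 * X 2] ((pderivProfile m c).homogenize m) := by
  rw [show (2 * m + 1) / 2 = m by omega, pderivProfile, Polynomial.homogenize_add,
    Polynomial.homogenize_finsetSum, map_add, map_add, map_sum, map_sum]
  have hX12 : pderiv 0 (X 1 * X 2 : MvPolynomial (Fin 3) ℂ) = 0 := by simp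
  congr 1
  · rw [Polynomial.homogenize_C_mul, Polynomial.homogenize_X_pow le_rfl]
    simp only [pderiv_pow, pderiv_X_self, map_mul, map_pow, aeval_X, Matrix.cons_val_zero,
      Nat.sub_self, pow_zero, mul_one, map_natCast, add_tsub_cancel_right, pow_mul]
  · refine Finset.sum_congr rfl fun r hr => ?_
    rw [Polynomial.homogenize_C_mul, Polynomial.homogenize_X_pow (Nat.sub_le m r),
      show m - (m - r) = r by grind]
    simp only [pderiv_mul, pderiv_C, pderiv_pow, pderiv_X_self, hX12, map_mul, map_pow,
      aeval_C, aeval_X, algebraMap_eq, Matrix.cons_val_zero, Matrix.cons_val_one, map_natCast]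
    rw [show 2 * m + 1 - 2 * r - 1 = 2 * (m - r) by grind, pow_mul]
    ring

theorem exists_pderiv_zero_eq_C_mul_prod (m : ℕ) (c : ℕ → ℝ) :
    ∃ z : Fin m → ℂ,
      pderiv 0 (X 0 ^ (2 * m + 1) + ∑ r ∈ Finset.Icc 1 ((2 * m + 1) / 2),
          C (c r : ℂ) * X 0 ^ (2 * m + 1 - 2 * r) * (X 1 * X 2) ^ r : MvPolynomial (Fin 3) ℂ) =
        C ((2 * m + 1 : ℕ) : ℂ) * ∏ i, (X 0 ^ 2 - C (z i) * X 1 * X 2) := by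
  obtain ⟨z, hz⟩ :=
    Polynomial.exists_eq_C_leadingCoeff_mul_prod_X_sub_C (natDegree_pderivProfile m c)
  rw [leadingCoeff_pderivProfile] at hz
  have hG := Polynomial.homogenize_C_mul_prod_X_sub_C ((2 * m + 1 : ℕ) : ℂ) Finset.univ z
  rw [Finset.card_univ, Fintype.card_fin] at hG
  refine ⟨z, ?_⟩
  rw [pderiv_zero_eq_aeval_homogenize, hz, hG]
  simp [map_prod, mul_assoc]

theorem Complex.exists_nonneg_ofReal_eq_of_forall_sq_eq {z : ℂ}
    (h : ∀ w : ℂ, w ^ 2 = z → w.im = 0) : ∃ s : ℝ, 0 ≤ s ∧ (s : ℂ) = z := by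
  obtain ⟨w, hw⟩ := IsAlgClosed.exists_pow_nat_eq z two_pos
  refine ⟨w.re ^ 2, sq_nonneg _, ?_⟩
  have hw_real : (w.re : ℂ) = w := Complex.ext rfl (by simp [h w hw])
  rw [← hw, Complex.ofReal_pow, hw_real]

/-- For odd `n` and `f = tⁿ + Σ c_r t^{n−2r}(uv)^r`, if `∂f/∂t(·, e^{iθ}, e^{−iθ})` has
all real roots for every `θ`, then `∂f/∂t = n·Π_{j=1}^{(n−1)/2} (t² − s_j·uv)` with
`s_j ∈ ℝ_{≥0}`. -/
theorem stmt13 (n : ℕ) (hn : Odd n) (c : ℕ → ℝ)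
    (f : MvPolynomial (Fin 3) ℂ)
    (hf : f = X 0 ^ n
      + ∑ r ∈ Finset.Icc 1 (n / 2), C ((c r : ℂ)) * X 0 ^ (n - 2 * r) * (X 1 * X 2) ^ r)
    (hhyp : ∀ θ : ℝ, ∀ z : ℂ,
      MvPolynomial.aeval ![z, Complex.exp (θ * Complex.I), Complex.exp (-θ * Complex.I)]
          (MvPolynomial.pderiv (0 : Fin 3) f) = 0 → z.im = 0) :
    ∃ s : Fin ((n - 1) / 2) → ℝ, (∀ j, 0 ≤ s j) ∧
      MvPolynomial.pderiv (0 : Fin 3) f =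
        C (n : ℂ) * ∏ j : Fin ((n - 1) / 2), (X 0 ^ 2 - C ((s j : ℂ)) * X 1 * X 2) := by
  obtain ⟨m, rfl⟩ := hn
  subst hf
  obtain ⟨z, hfactor⟩ := exists_pderiv_zero_eq_C_mul_prod m c
  have hroots (i : Fin m) (w : ℂ) (hw : w ^ 2 = z i) : w.im = 0 := by
    refine hhyp 0 w ?_
    rw [hfactor]
    simp [hw, Finset.prod_eq_zero (Finset.mem_univ i)]
  choose s hs_nonneg hs using fun i => Complex.exists_nonneg_ofReal_eq_of_forall_sq_eq (hroots i)
  rw [show (2 * m + 1 - 1) / 2 = m by omega]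
  exact ⟨s, hs_nonneg, by simp_rw [hfactor, hs]⟩
end

section
/- Let n be odd and f(t,u,v) = t^n + Σ_{r=1}^{⌊n/2⌋} c_r t^{n−2r}(uv)^r + c_0(u^n+v^n)/2 + c̃_0(u^n−v^n)/(2i) with (c_0, c̃_0) ≠ (0,0). Then there is no common zero of f and ∂f/∂t in ℙ²(ℂ) with t = 0. -/
/-!
For `n = 2m + 1`, restricting `f` to lines through `(1, 0, 0)` gives the polynomial
`t ↦ t^n + ∑ c_r (uv)^r t^(n-2r) + (a u^n + b v^n)` with `a, b = (c₀ ∓ i c̃₀)/2 ≠ 0`.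
At `t = 0` a common zero of `f` and `∂f/∂t` therefore has `a u^n + b v^n = 0`, hence `uv ≠ 0`,
and `c_m (uv)^m = 0` (for `n = 1` the derivative is `1`), hence `c_m = 0`.
On the circle `u = e^{iθ}`, `v = e^{-iθ}` the restriction is then a monic real-rooted polynomial
whose coefficients of `t` and `t²` vanish, while its constant term is nonzero for `θ = 0` or
`θ = π/(2n)`. This is impossible: for nonzero roots `rᵢ` of a polynomial `∑ aₖ tᵏ`,
`∑ rᵢ⁻² = (a₁² - 2 a₂ a₀) / a₀²`, which would vanish although every `rᵢ⁻²` is positive.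
-/

section Polynomials

open Polynomial

theorem prod_X_sub_C_coeff_one_sq_sub_two_mul_coeff_two_mul_coeff_zero {K : Type*} [Field K]
    (s : Multiset K) (hs : ∀ r ∈ s, r ≠ 0) :
    ((s.map (fun r => X - C r)).prod).coeff 1 ^ 2
      - 2 * ((s.map (fun r => X - C r)).prod).coeff 2 * ((s.map (fun r => X - C r)).prod).coeff 0
    = (s.map (fun r => r⁻¹ ^ 2)).sum * ((s.map (fun r => X - C r)).prod).coeff 0 ^ 2 := by
  induction s using Multiset.induction with
  | empty => simp [coeff_one]
  | cons a s ih =>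
    have ha : a ≠ 0 := hs a (Multiset.mem_cons_self a s)
    specialize ih fun r hr => hs r (Multiset.mem_cons_of_mem hr)
    set q := (s.map (fun r => X - C r)).prod
    have hsucc : ∀ k, ((X - C a) * q).coeff (k + 1) = q.coeff k - a * q.coeff (k + 1) := by
      intro k
      simp only [sub_mul, coeff_sub, coeff_X_mul, coeff_C_mul]
    have hzero : ((X - C a) * q).coeff 0 = -a * q.coeff 0 := by
      simp [sub_mul, mul_coeff_zero]
    simp only [Multiset.map_cons, Multiset.prod_cons, Multiset.sum_cons]
    rw [hsucc 0, hsucc 1, hzero]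
    have haa : a⁻¹ ^ 2 * a ^ 2 = 1 := by field_simp
    linear_combination a ^ 2 * ih - q.coeff 0 ^ 2 * haa

theorem coeff_zero_eq_zero_of_forall_mem_roots_im_eq_zero {P : ℂ[X]} (hP : P.Monic)
    (hdeg : P.natDegree ≠ 0) (hreal : ∀ z ∈ P.roots, z.im = 0) (h1 : P.coeff 1 = 0)
    (h2 : P.coeff 2 = 0) : P.coeff 0 = 0 := by
  by_contra h0
  have hroots : ∀ z ∈ P.roots, z ≠ 0 := by
    rintro z hz rfl
    exact h0 (by rw [coeff_zero_eq_eval_zero]; exact (mem_roots hP.ne_zero).1 hz)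
  have hid := prod_X_sub_C_coeff_one_sq_sub_two_mul_coeff_two_mul_coeff_zero P.roots hroots
  rw [← (IsAlgClosed.splits P).eq_prod_roots_of_monic hP, h1, h2] at hid
  have hsum : (P.roots.map fun z => z⁻¹ ^ 2).sum = 0 := by
    simpa [h0] using hid.symm
  have hnonempty : P.roots ≠ 0 := by
    rw [← Multiset.card_pos, ← (IsAlgClosed.splits P).natDegree_eq_card_roots]
    exact Nat.pos_of_ne_zero hdeg
  have hre : ((P.roots.map fun z => z⁻¹ ^ 2).map Complex.re).sum = 0 := by
    have h := map_multiset_sum Complex.reAddGroupHom (P.roots.map fun z => z⁻¹ ^ 2)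
    rw [hsum, map_zero] at h
    exact h.symm
  refine (Multiset.sum_lt_sum_of_nonempty hnonempty (f := fun _ => (0 : ℝ))
    (g := fun z => (z⁻¹ ^ 2).re) fun z hz => ?_).ne' ?_
  · have hz' : z = (z.re : ℂ) := Complex.ext rfl (by simp [hreal z hz])
    have hzre : z.re ≠ 0 := fun h => hroots z hz (by rw [hz', h, Complex.ofReal_zero])
    rw [hz', ← Complex.ofReal_inv, ← Complex.ofReal_pow, Complex.ofReal_re]
    positivity
  · simpa [Multiset.map_map] using hre

section OddNormalForm

variable {R : Type*} [Semiring R] (m : ℕ) (d : ℕ → R) (g : R)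

noncomputable def oddNormalForm : R[X] :=
  X ^ (2 * m + 1) + ∑ r ∈ Finset.Icc 1 m, C (d r) * X ^ (2 * m + 1 - 2 * r) + C g

theorem coeff_oddNormalForm (k : ℕ) :
    (oddNormalForm m d g).coeff k = (if k = 2 * m + 1 then 1 else 0)
      + ∑ r ∈ Finset.Icc 1 m, (if k = 2 * m + 1 - 2 * r then d r else 0)
      + if k = 0 then g else 0 := by
  simp [oddNormalForm, coeff_X_pow, coeff_C, coeff_C_mul]

theorem oddNormalForm_coeff_zero : (oddNormalForm m d g).coeff 0 = g := by
  rw [coeff_oddNormalForm, Finset.sum_eq_zero fun r hr => if_neg ?_]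
  · simp
  · have := (Finset.mem_Icc.1 hr).2; omega

theorem oddNormalForm_coeff_one (hm : m ≠ 0) : (oddNormalForm m d g).coeff 1 = d m := by
  rw [coeff_oddNormalForm, Finset.sum_eq_single_of_mem m (Finset.mem_Icc.2 ⟨by omega, le_rfl⟩)]
  · rw [if_neg (by omega), if_pos (by omega), if_neg one_ne_zero]
    simp
  · intro r hr hrm
    have := Finset.mem_Icc.1 hr
    exact if_neg (by omega)

theorem oddNormalForm_zero_coeff_one : (oddNormalForm 0 d g).coeff 1 = 1 := by
  simp [coeff_oddNormalForm]

theorem oddNormalForm_coeff_two : (oddNormalForm m d g).coeff 2 = 0 := by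
  rw [coeff_oddNormalForm, Finset.sum_eq_zero fun r hr => if_neg (by omega), if_neg (by omega)]
  simp

theorem oddNormalForm_coeff_top : (oddNormalForm m d g).coeff (2 * m + 1) = 1 := by
  rw [coeff_oddNormalForm, Finset.sum_eq_zero fun r hr => if_neg ?_, if_pos rfl, if_neg (by omega)]
  · simp
  · have := (Finset.mem_Icc.1 hr).1; omega

theorem natDegree_oddNormalForm [Nontrivial R] : (oddNormalForm m d g).natDegree = 2 * m + 1 := by
  refine natDegree_eq_of_le_of_coeff_ne_zero ((natDegree_le_iff_coeff_eq_zero).2 fun k hk => ?_) ?_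
  · rw [coeff_oddNormalForm, Finset.sum_eq_zero fun r hr => if_neg (by omega),
      if_neg (by omega), if_neg (by omega)]
    simp
  · simp [oddNormalForm_coeff_top]

theorem monic_oddNormalForm [Nontrivial R] : (oddNormalForm m d g).Monic := by
  rw [Monic, leadingCoeff, natDegree_oddNormalForm, oddNormalForm_coeff_top]

end OddNormalForm

theorem eq_zero_of_oddNormalForm_roots_real {m : ℕ} (hm : m ≠ 0) {d : ℕ → ℂ} {g : ℂ}
    (hd : d m = 0) (hreal : ∀ z, (oddNormalForm m d g).eval z = 0 → z.im = 0) : g = 0 := by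
  have hmonic := monic_oddNormalForm m d g
  rw [← oddNormalForm_coeff_zero m d g]
  refine coeff_zero_eq_zero_of_forall_mem_roots_im_eq_zero hmonic
    (by rw [natDegree_oddNormalForm]; omega) (fun z hz => hreal z ((mem_roots hmonic.ne_zero).1 hz))
    (by rw [oddNormalForm_coeff_one m d g hm, hd]) (oddNormalForm_coeff_two m d g)

section Slices

variable {R : Type*} [CommRing R] {k : ℕ}

theorem derivative_aeval_eq_aeval_pderiv {σ : Type*} [DecidableEq σ] (i : σ) (y : σ → R[X])
    (hy : ∀ j, derivative (y j) = if j = i then 1 else 0) (p : MvPolynomial σ R) :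
    derivative (MvPolynomial.aeval y p) = MvPolynomial.aeval y (MvPolynomial.pderiv i p) := by
  induction p using MvPolynomial.induction_on with
  | C a => simp
  | add p q hp hq => simp [hp, hq]
  | mul_X p j hp =>
    rw [map_mul, derivative_mul, hp, Derivation.leibniz, MvPolynomial.pderiv_X,
      MvPolynomial.aeval_X, hy]
    by_cases h : j = i
    · subst h; simp [add_comm, mul_comm]
    · simp [h, mul_comm]

theorem eval_aeval_vecCons (p : MvPolynomial (Fin (k + 1)) R) (z : R) (x : Fin k → R) :
    (MvPolynomial.aeval (Matrix.vecCons X (C ∘ x)) p).eval z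
      = MvPolynomial.aeval (Matrix.vecCons z x) p := by
  induction p using MvPolynomial.induction_on with
  | C a => simp
  | add p q hp hq => simp [hp, hq]
  | mul_X p j hp =>
    refine Fin.cases ?_ (fun j => ?_) j <;> simp [hp]

theorem aeval_vecCons_zero_eq_coeff_zero (p : MvPolynomial (Fin (k + 1)) R) (x : Fin k → R) :
    MvPolynomial.aeval (Matrix.vecCons 0 x) p
      = (MvPolynomial.aeval (Matrix.vecCons X (C ∘ x)) p).coeff 0 := by
  rw [coeff_zero_eq_eval_zero, eval_aeval_vecCons]

theorem aeval_vecCons_zero_pderiv_zero_eq_coeff_one (p : MvPolynomial (Fin (k + 1)) R)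
    (x : Fin k → R) :
    MvPolynomial.aeval (Matrix.vecCons 0 x) (MvPolynomial.pderiv 0 p)
      = (MvPolynomial.aeval (Matrix.vecCons X (C ∘ x)) p).coeff 1 := by
  rw [← eval_aeval_vecCons, ← derivative_aeval_eq_aeval_pderiv 0, ← coeff_zero_eq_eval_zero,
    coeff_derivative, zero_add, Nat.cast_zero, zero_add, mul_one]
  intro j
  refine Fin.cases ?_ (fun j => ?_) j <;> simp [Fin.succ_ne_zero]

end Slices

end Polynomials

theorem ne_zero_and_ne_zero_of_mul_pow_add_mul_pow_eq_zero {K : Type*} [Semiring K]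
    [NoZeroDivisors K] {a b u v : K} {n : ℕ} (ha : a ≠ 0) (hb : b ≠ 0) (hn : n ≠ 0) (huv : (u, v) ≠ (0, 0))
    (h : a * u ^ n + b * v ^ n = 0) : u ≠ 0 ∧ v ≠ 0 := by
  constructor <;> rintro rfl <;> simp_all [zero_pow hn]

open Complex in
theorem exists_mul_exp_pow_add_mul_exp_neg_pow_ne_zero {a : ℂ} (b : ℂ) (ha : a ≠ 0) {n : ℕ}
    (hn : n ≠ 0) : ∃ θ : ℝ, a * exp (θ * I) ^ n + b * exp (-θ * I) ^ n ≠ 0 := by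
  by_contra! h
  have h0 := h 0
  have h1 := h (Real.pi / (2 * n))
  simp only [ofReal_zero, zero_mul, neg_zero, exp_zero, one_pow, mul_one] at h0
  rw [← exp_nat_mul, ← exp_nat_mul] at h1
  have hn' : (n : ℂ) ≠ 0 := Nat.cast_ne_zero.2 hn
  rw [show (n : ℂ) * (↑(Real.pi / (2 * n)) * I) = Real.pi / 2 * I by push_cast; field_simp,
    show (n : ℂ) * (-↑(Real.pi / (2 * n)) * I) = -Real.pi / 2 * I by push_cast; field_simp,
    exp_pi_div_two_mul_I, exp_neg_pi_div_two_mul_I] at h1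
  exact ha (by linear_combination (h0 - I * h1) / 2 + (a - b) / 2 * I_sq)

open MvPolynomial Complex in
theorem aeval_vecCons_X_eq_oddNormalForm {n m : ℕ} (hm : n = 2 * m + 1) (c : ℕ → ℝ)
    (c0 ctil : ℝ) (f : MvPolynomial (Fin 3) ℂ)
    (hf : f = X 0 ^ n
      + ∑ r ∈ Finset.Icc 1 (n / 2), C ((c r : ℂ)) * X 0 ^ (n - 2 * r) * (X 1 * X 2) ^ r
      + C ((c0 : ℂ) / 2) * (X 1 ^ n + X 2 ^ n)
      + C ((ctil : ℂ) / (2 * Complex.I)) * (X 1 ^ n - X 2 ^ n)) (u v : ℂ) :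
    aeval (Matrix.vecCons Polynomial.X (Polynomial.C ∘ ![u, v])) f
      = oddNormalForm m (fun r => c r * (u * v) ^ r)
          ((c0 - ctil * I) / 2 * u ^ n + (c0 + ctil * I) / 2 * v ^ n) := by
  have hdiv : n / 2 = m := by omega
  subst hf hm
  have hconst : (c0 : ℂ) / 2 * (u ^ (2 * m + 1) + v ^ (2 * m + 1))
      + ctil / (2 * I) * (u ^ (2 * m + 1) - v ^ (2 * m + 1))
      = (c0 - ctil * I) / 2 * u ^ (2 * m + 1) + (c0 + ctil * I) / 2 * v ^ (2 * m + 1) := by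
    field_simp
    linear_combination (u ^ (2 * m + 1) - v ^ (2 * m + 1)) * ctil * I_sq
  rw [← hconst]
  simp only [oddNormalForm, hdiv, map_add, map_sub, map_mul, map_pow, map_sum, aeval_X, aeval_C,
    Polynomial.algebraMap_eq, Matrix.cons_val_zero, Matrix.cons_val_one, Matrix.cons_val_two,
    Matrix.vecHead, Matrix.vecTail, Matrix.cons_val_succ, Function.comp_apply]
  ring_nf
  ac_rfl

open MvPolynomial Complex

/-- For odd `n` and hyperbolic `f` in normal form with `(c₀, c̃₀) ≠ (0,0)`, every common
projective zero of `f` and `∂f/∂t` has `t ≠ 0`. -/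
theorem stmt14 (n : ℕ) (hn : Odd n) (c : ℕ → ℝ) (c0 ctil : ℝ)
    (hne : (c0, ctil) ≠ (0, 0))
    (f : MvPolynomial (Fin 3) ℂ)
    (hf : f = X 0 ^ n
      + ∑ r ∈ Finset.Icc 1 (n / 2), C ((c r : ℂ)) * X 0 ^ (n - 2 * r) * (X 1 * X 2) ^ r
      + C ((c0 : ℂ) / 2) * (X 1 ^ n + X 2 ^ n)
      + C ((ctil : ℂ) / (2 * Complex.I)) * (X 1 ^ n - X 2 ^ n))
    (hhyp : ∀ θ : ℝ, ∀ z : ℂ,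
      MvPolynomial.aeval ![z, Complex.exp (θ * Complex.I), Complex.exp (-θ * Complex.I)] f = 0 →
        z.im = 0) :
    ∀ u v : ℂ, (u, v) ≠ (0, 0) →
      ¬ (MvPolynomial.aeval ![(0 : ℂ), u, v] f = 0 ∧
          MvPolynomial.aeval ![(0 : ℂ), u, v] (MvPolynomial.pderiv (0 : Fin 3) f) = 0) := by
  obtain ⟨m, hm⟩ := hn
  have hslice := aeval_vecCons_X_eq_oddNormalForm hm c c0 ctil f hf
  have ha : (c0 - ctil * I : ℂ) / 2 ≠ 0 := fun h => hne (by simpa [Complex.ext_iff] using h)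
  have hb : (c0 + ctil * I : ℂ) / 2 ≠ 0 := fun h => hne (by simpa [Complex.ext_iff] using h)
  rintro u v huv ⟨h0, h1⟩
  rw [aeval_vecCons_zero_eq_coeff_zero, hslice, oddNormalForm_coeff_zero] at h0
  rw [aeval_vecCons_zero_pderiv_zero_eq_coeff_one, hslice] at h1
  obtain ⟨hu, hv⟩ := ne_zero_and_ne_zero_of_mul_pow_add_mul_pow_eq_zero ha hb (by omega) huv h0
  rcases eq_or_ne m 0 with rfl | hm0
  · exact one_ne_zero ((oddNormalForm_zero_coeff_one _ _).symm.trans h1)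
  rw [oddNormalForm_coeff_one _ _ _ hm0] at h1
  have hcm : (c m : ℂ) = 0 := by simpa [hu, hv] using h1
  obtain ⟨θ, hθ⟩ :=
    exists_mul_exp_pow_add_mul_exp_neg_pow_ne_zero ((c0 + ctil * I) / 2) ha (by omega : n ≠ 0)
  have hreal : ∀ z, (aeval (Matrix.vecCons Polynomial.X
      (Polynomial.C ∘ ![exp (θ * I), exp (-θ * I)])) f).eval z = 0 → z.im = 0 :=
    fun z hz => hhyp θ z (by rwa [← eval_aeval_vecCons])
  rw [hslice] at hreal
  exact hθ (eq_zero_of_oddNormalForm_roots_real hm0 (by simp [hcm]) hreal)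
end
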